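/- arXiv:math/0509716 — 2 statements merged into one kernel-verified Lean document; each statement's English description precedes it below -/
import Mathlib

section
/- For all integers n ≥ 1 and v ≥ 2n, the least distortion of an embedding of the Johnson graph J(v,n) into Euclidean space equals √n, i.e. c_2(J(v,n)) = √n. -/
open scoped BigOperators

/-- The least distortion `c₂(G)` of an embedding of the connected graph `G`
(with its shortest path metric) into Euclidean space. -/
noncomputable def leastDistortion {V : Type*} [Fintype V] (G : SimpleGraph V) : ℝ :=
  sInf {D : ℝ | ∃ (m : ℕ) (ρ : V → EuclideanSpace ℝ (Fin m)),
    ∀ x y : V, (G.dist x y : ℝ) ≤ ‖ρ x - ρ y‖ ∧ ‖ρ x - ρ y‖ ≤ D * (G.dist x y : ℝ)}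

/-- The Johnson graph `J(v, n)`: vertices are the `n`-element subsets of a
`v`-element set, two being adjacent iff their intersection has `n − 1` elements. -/
def johnsonGraph (v n : ℕ) : SimpleGraph {s : Finset (Fin v) // s.card = n} where
  Adj x y := x ≠ y ∧ (x.1 ∩ y.1).card = n - 1
  symm := ⟨by
    intro x y ⟨h1, h2⟩
    exact ⟨h1.symm, by rwa [Finset.inter_comm]⟩⟩
  loopless := ⟨fun x h => h.1 rfl⟩

/-!
The map `s ↦ √(n/2) • 𝟙_s` sends two vertices at Johnson distance `d = |x \ y|` to points at
Euclidean distance `√(n d)`, which lies between `d` and `√n d` because `d ≤ n`.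

Conversely, since `v ≥ 2n` the cube `{0,1}ⁿ` with its Hamming metric embeds isometrically into
`J(v,n)` via `x ↦ {(i, x i)} ⊆ [n] × {0,1} ⊆ [v]`. By Enflo's inequality, which follows by induction
on `n` from the quadrilateral inequality, the squared diagonals of any map of the cube into a
Euclidean space sum to at most its squared edges. For an embedding of distortion `D` this compares
`2ⁿ n²` with `2ⁿ n D²`, so `D ≥ √n`.
-/

open Finset

theorem leastDistortion_eq_of_embedding {V : Type*} [Fintype V] {G : SimpleGraph V} {c : ℝ}
    {m : ℕ} (ρ : V → EuclideanSpace ℝ (Fin m))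
    (hρ : ∀ x y, (G.dist x y : ℝ) ≤ ‖ρ x - ρ y‖ ∧ ‖ρ x - ρ y‖ ≤ c * G.dist x y)
    (hc : ∀ (D : ℝ) (m : ℕ) (ρ : V → EuclideanSpace ℝ (Fin m)),
      (∀ x y, (G.dist x y : ℝ) ≤ ‖ρ x - ρ y‖ ∧ ‖ρ x - ρ y‖ ≤ D * G.dist x y) → c ≤ D) :
    leastDistortion G = c :=
  IsLeast.csInf_eq ⟨⟨m, ρ, hρ⟩, fun D ⟨m, ρ, h⟩ => hc D m ρ h⟩

section Cube

variable {ι E : Type*} [Fintype ι] [NormedAddCommGroup E] [InnerProductSpace ℝ E]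

theorem norm_sub_sq_add_norm_sub_sq_le (a b c d : E) :
    ‖a - d‖ ^ 2 + ‖b - c‖ ^ 2 ≤ ‖a - b‖ ^ 2 + ‖c - d‖ ^ 2 + ‖a - c‖ ^ 2 + ‖b - d‖ ^ 2 := by
  have h := sq_nonneg ‖a - b - c + d‖
  simp only [← real_inner_self_eq_norm_sq, inner_sub_left, inner_sub_right, inner_add_left,
    inner_add_right, real_inner_comm] at h ⊢
  linarith

theorem Fin.sum_bool_pi_succ {M : Type*} [AddCommMonoid M] {n : ℕ}
    (g : (Fin (n + 1) → Bool) → M) :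
    ∑ x, g x = ∑ y : Fin n → Bool, (g (Fin.cons true y) + g (Fin.cons false y)) := by
  rw [← (Fin.consEquiv fun _ => Bool).sum_comp, Fintype.sum_prod_type, Fintype.sum_bool,
    ← sum_add_distrib]
  rfl

theorem Fin.not_comp_cons {n : ℕ} (b : Bool) (y : Fin n → Bool) :
    (fun i => !(Fin.cons b y : Fin (n + 1) → Bool) i) = Fin.cons (!b) fun i => !y i := by
  ext i
  cases i using Fin.cases <;> simp

theorem enflo_inequality (n : ℕ) (f : (Fin n → Bool) → E) :
    ∑ x, ‖f x - f (fun i => !x i)‖ ^ 2 ≤ ∑ x, ∑ i, ‖f x - f (Function.update x i (!x i))‖ ^ 2 := by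
  induction n with
  | zero => simp [Unique.eq_default (fun i : Fin 0 => _)]
  | succ n ih =>
    -- Splitting off the first coordinate, the diagonals through `cons b y` form a quadrilateral
    -- with two first-coordinate edges and the diagonals of the two half-cubes through `y`.
    have hquad := sum_le_sum fun y (_ : y ∈ univ) => norm_sub_sq_add_norm_sub_sq_le
      (f (Fin.cons true y)) (f (Fin.cons false y))
      (f (Fin.cons true fun i => !y i)) (f (Fin.cons false fun i => !y i))
    have hnot : ∑ y : Fin n → Bool,
        ‖f (Fin.cons true fun i => !y i) - f (Fin.cons false fun i => !y i)‖ ^ 2 =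
          ∑ y, ‖f (Fin.cons true y) - f (Fin.cons false y)‖ ^ 2 :=
      Equiv.sum_comp (Function.Involutive.toPerm (fun y i => !y i) fun y => by simp) fun y =>
        ‖f (Fin.cons true y) - f (Fin.cons false y)‖ ^ 2
    have h₁ := ih fun y => f (Fin.cons true y)
    have h₀ := ih fun y => f (Fin.cons false y)
    rw [Fin.sum_bool_pi_succ, Fin.sum_bool_pi_succ]
    simp only [Fin.not_comp_cons, Fin.sum_univ_succ, Fin.cons_zero, Fin.update_cons_zero,
      Fin.cons_succ, ← Fin.cons_update, Bool.not_true, Bool.not_false, sum_add_distrib] at hquad ⊢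
    rw [hnot] at hquad
    simp only [norm_sub_rev (f (Fin.cons false _)) (f (Fin.cons true _))] at hquad ⊢
    linarith

theorem hammingDist_not (x : ι → Bool) : hammingDist x (fun i => !x i) = Fintype.card ι := by
  simp [hammingDist]

theorem hammingDist_update_not [DecidableEq ι] (x : ι → Bool) (i : ι) :
    hammingDist x (Function.update x i (!x i)) = 1 := by
  rw [hammingDist, card_eq_one]
  refine ⟨i, ?_⟩
  ext j
  by_cases h : j = i <;> simp [h]

theorem sqrt_le_of_hammingDist_le_norm_sub {n : ℕ} (hn : 0 < n) {f : (Fin n → Bool) → E} {D : ℝ}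
    (hf : ∀ x y, (hammingDist x y : ℝ) ≤ ‖f x - f y‖ ∧ ‖f x - f y‖ ≤ D * hammingDist x y) :
    √n ≤ D := by
  have hn' : (0 : ℝ) < n := by exact_mod_cast hn
  have hD : 1 ≤ D := by
    have h := hf default fun i => !(default : Fin n → Bool) i
    rw [hammingDist_not, Fintype.card_fin] at h
    nlinarith [h.1.trans h.2]
  have hdiag : ∀ x, (n : ℝ) ^ 2 ≤ ‖f x - f (fun i => !x i)‖ ^ 2 := fun x => by
    have h := (hf x fun i => !x i).1
    rw [hammingDist_not, Fintype.card_fin] at h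
    gcongr
  have hedge : ∀ x i, ‖f x - f (Function.update x i (!x i))‖ ^ 2 ≤ D ^ 2 := fun x i => by
    have h := (hf x (Function.update x i (!x i))).2
    rw [hammingDist_update_not, Nat.cast_one, mul_one] at h
    gcongr
  have hsum : ∑ _x : Fin n → Bool, (n : ℝ) ^ 2 ≤ ∑ _x : Fin n → Bool, ∑ _i : Fin n, D ^ 2 :=
    calc ∑ _x : Fin n → Bool, (n : ℝ) ^ 2
        ≤ ∑ x, ‖f x - f (fun i => !x i)‖ ^ 2 := sum_le_sum fun x _ => hdiag x
      _ ≤ ∑ x, ∑ i, ‖f x - f (Function.update x i (!x i))‖ ^ 2 := enflo_inequality n f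
      _ ≤ _ := sum_le_sum fun x _ => sum_le_sum fun i _ => hedge x i
  simp only [sum_const, card_univ, Fintype.card_fin, nsmul_eq_mul] at hsum
  have hnD : (n : ℝ) ≤ D ^ 2 := by
    have := le_of_mul_le_mul_left hsum (by positivity)
    nlinarith
  exact Real.sqrt_le_iff.2 ⟨by linarith, hnD⟩

end Cube

section Graph

variable {ι β : Type*} [Fintype ι]

def graphFinset (x : ι → β) : Finset (ι × β) :=
  univ.map ⟨fun i => (i, x i), fun _ _ h => congrArg Prod.fst h⟩

@[simp]
theorem mem_graphFinset {x : ι → β} {i : ι} {b : β} : (i, b) ∈ graphFinset x ↔ x i = b := by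
  rw [graphFinset, mem_map]
  change (∃ a ∈ univ, (a, x a) = (i, b)) ↔ _
  simp

@[simp]
theorem card_graphFinset (x : ι → β) : #(graphFinset x) = Fintype.card ι := by
  simp [graphFinset]

theorem card_graphFinset_sdiff [DecidableEq ι] [DecidableEq β] (x y : ι → β) :
    #(graphFinset x \ graphFinset y) = hammingDist x y :=
  card_nbij' Prod.fst (fun i => (i, x i))
    (by rintro ⟨i, b⟩; simp +contextual [eq_comm])
    (by intro i; simp [eq_comm])
    (by rintro ⟨i, b⟩; simp +contextual)
    (by intro i; simp)

end Graph

section IndicatorVec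

variable {ι : Type*} [DecidableEq ι]

noncomputable def indicatorVec (c : ℝ) (s : Finset ι) : EuclideanSpace ℝ ι :=
  WithLp.toLp 2 fun i => if i ∈ s then c else 0

theorem norm_indicatorVec_sub_sq [Fintype ι] (c : ℝ) (s t : Finset ι) :
    ‖indicatorVec c s - indicatorVec c t‖ ^ 2 = c ^ 2 * (#(s \ t) + #(t \ s)) := by
  have hterm : ∀ i, (indicatorVec c s i - indicatorVec c t i) ^ 2 =
      (if i ∈ s \ t then c ^ 2 else 0) + (if i ∈ t \ s then c ^ 2 else 0) := by
    intro i
    by_cases hs : i ∈ s <;> by_cases ht : i ∈ t <;> simp [indicatorVec, hs, ht]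
  simp only [EuclideanSpace.real_norm_sq_eq, PiLp.sub_apply, hterm, sum_add_distrib, sum_ite_mem,
    univ_inter, sum_const, nsmul_eq_mul]
  ring

end IndicatorVec

section Johnson

variable {v n : ℕ}

theorem johnsonGraph_adj_iff {x y : {s : Finset (Fin v) // #s = n}} :
    (johnsonGraph v n).Adj x y ↔ #(x.1 \ y.1) = 1 := by
  have hcard := card_inter_add_card_sdiff x.1 y.1
  rw [x.2] at hcard
  have hne : x ≠ y ↔ #(x.1 \ y.1) ≠ 0 := by
    rw [Ne, Ne, card_eq_zero, sdiff_eq_empty_iff_subset, not_iff_not, Subtype.ext_iff]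
    exact ⟨fun h => h.le, fun h => eq_of_subset_of_card_le h (by rw [x.2, y.2])⟩
  change x ≠ y ∧ _ ↔ _
  rw [hne]
  omega

theorem card_sdiff_le_length_of_walk {x y : {s : Finset (Fin v) // #s = n}}
    (w : (johnsonGraph v n).Walk x y) : #(x.1 \ y.1) ≤ w.length := by
  induction w with
  | nil => simp
  | @cons x z y h w ih =>
    calc #(x.1 \ y.1) ≤ #(x.1 \ z.1 ∪ z.1 \ y.1) := card_le_card (sdiff_triangle _ _ _)
      _ ≤ #(x.1 \ z.1) + #(z.1 \ y.1) := card_union_le _ _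
      _ ≤ (w.cons h).length := by
        rw [johnsonGraph_adj_iff.1 h, SimpleGraph.Walk.length_cons]
        omega

theorem exists_walk_length_eq_card_sdiff (x y : {s : Finset (Fin v) // #s = n}) :
    ∃ w : (johnsonGraph v n).Walk x y, w.length = #(x.1 \ y.1) := by
  induction hk : #(x.1 \ y.1) generalizing x with
  | zero =>
    obtain rfl : x = y := Subtype.ext <| eq_of_subset_of_card_le
      (sdiff_eq_empty_iff_subset.1 (card_eq_zero.1 hk)) (by rw [x.2, y.2])
    exact ⟨.nil, rfl⟩
  | succ k ih =>
    obtain ⟨a, ha⟩ : (x.1 \ y.1).Nonempty := card_pos.1 (by omega)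
    obtain ⟨b, hb⟩ : (y.1 \ x.1).Nonempty :=
      card_pos.1 (by rw [← card_sdiff_comm (x.2.trans y.2.symm)]; omega)
    rw [mem_sdiff] at ha hb
    have hn : 0 < n := x.2 ▸ card_pos.2 ⟨a, ha.1⟩
    let x' : {s : Finset (Fin v) // #s = n} :=
      ⟨insert b (x.1.erase a), by
        rw [card_insert_of_notMem (fun h => hb.2 (mem_of_mem_erase h)), card_erase_of_mem ha.1, x.2]
        omega⟩
    have hxx' : x.1 \ x'.1 = {a} := by grind
    have hx'y : x'.1 \ y.1 = (x.1 \ y.1).erase a := by grind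
    obtain ⟨w, hw⟩ := ih x' (by rw [hx'y, card_erase_of_mem (mem_sdiff.2 ha), hk]; rfl)
    exact ⟨.cons (johnsonGraph_adj_iff.2 (by rw [hxx', card_singleton])) w, by simp [hw]⟩

theorem johnsonGraph_dist (x y : {s : Finset (Fin v) // #s = n}) :
    (johnsonGraph v n).dist x y = #(x.1 \ y.1) := by
  obtain ⟨w, hw⟩ := exists_walk_length_eq_card_sdiff x y
  obtain ⟨w', hw'⟩ := SimpleGraph.Reachable.exists_walk_length_eq_dist ⟨w⟩
  exact le_antisymm (hw ▸ SimpleGraph.dist_le w) (hw' ▸ card_sdiff_le_length_of_walk w')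

noncomputable def johnsonEmbedding (v n : ℕ) (s : {s : Finset (Fin v) // #s = n}) :
    EuclideanSpace ℝ (Fin v) :=
  indicatorVec √(n / 2) s.1

theorem norm_johnsonEmbedding_sub_sq (x y : {s : Finset (Fin v) // #s = n}) :
    ‖johnsonEmbedding v n x - johnsonEmbedding v n y‖ ^ 2 = n * (johnsonGraph v n).dist x y := by
  rw [johnsonEmbedding, johnsonEmbedding, norm_indicatorVec_sub_sq,
    ← card_sdiff_comm (x.2.trans y.2.symm), johnsonGraph_dist, Real.sq_sqrt (by positivity)]
  ring

theorem johnsonEmbedding_bounds (x y : {s : Finset (Fin v) // #s = n}) :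
    ((johnsonGraph v n).dist x y : ℝ) ≤ ‖johnsonEmbedding v n x - johnsonEmbedding v n y‖ ∧
      ‖johnsonEmbedding v n x - johnsonEmbedding v n y‖ ≤ √n * (johnsonGraph v n).dist x y := by
  have hsq := norm_johnsonEmbedding_sub_sq x y
  have hdn : ((johnsonGraph v n).dist x y : ℝ) ≤ n := by
    rw [johnsonGraph_dist]
    exact_mod_cast (card_le_card sdiff_subset).trans_eq x.2
  set d := (johnsonGraph v n).dist x y
  have hdd : (d : ℝ) ≤ d ^ 2 := by exact_mod_cast Nat.le_self_pow two_ne_zero d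
  constructor
  · refine (pow_le_pow_iff_left₀ (by positivity) (norm_nonneg _) two_ne_zero).1 ?_
    rw [hsq, sq]
    gcongr
  · refine (pow_le_pow_iff_left₀ (norm_nonneg _) (by positivity) two_ne_zero).1 ?_
    rw [hsq, mul_pow, Real.sq_sqrt (by positivity)]
    gcongr

def finProdBoolEmbedding (hv : 2 * n ≤ v) : Fin n × Bool ↪ Fin v :=
  (((Equiv.refl _).prodCongr finTwoEquiv.symm).trans finProdFinEquiv).toEmbedding.trans
    (Fin.castLEEmb (by omega))

def cubeToJohnson (hv : 2 * n ≤ v) (x : Fin n → Bool) : {s : Finset (Fin v) // #s = n} :=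
  ⟨(graphFinset x).map (finProdBoolEmbedding hv), by simp⟩

theorem johnsonGraph_dist_cubeToJohnson (hv : 2 * n ≤ v) (x y : Fin n → Bool) :
    (johnsonGraph v n).dist (cubeToJohnson hv x) (cubeToJohnson hv y) = hammingDist x y := by
  rw [johnsonGraph_dist, cubeToJohnson, cubeToJohnson, ← Finset.map_sdiff, card_map,
    card_graphFinset_sdiff]

theorem sqrt_le_of_johnsonGraph_embedding {E : Type*} [NormedAddCommGroup E]
    [InnerProductSpace ℝ E] (hn : 0 < n) (hv : 2 * n ≤ v) {ρ : {s : Finset (Fin v) // #s = n} → E}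
    {D : ℝ} (hρ : ∀ x y, ((johnsonGraph v n).dist x y : ℝ) ≤ ‖ρ x - ρ y‖ ∧
      ‖ρ x - ρ y‖ ≤ D * (johnsonGraph v n).dist x y) :
    √n ≤ D :=
  sqrt_le_of_hammingDist_le_norm_sub hn fun x y => by
    simpa only [johnsonGraph_dist_cubeToJohnson] using hρ (cubeToJohnson hv x) (cubeToJohnson hv y)

end Johnson

theorem stmt9 (v n : ℕ) (hn : 1 ≤ n) (hv : 2 * n ≤ v) :
    leastDistortion (johnsonGraph v n) = Real.sqrt n :=
  leastDistortion_eq_of_embedding (johnsonEmbedding v n) johnsonEmbedding_bounds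
    fun _ _ _ hρ => sqrt_le_of_johnsonGraph_embedding hn hv hρ
end

section
/- Let G be a connected strongly regular graph of diameter 2 with parameters (ν, k, λ, μ), adjacency matrix A, and let r = (1/2)·((λ − μ) + √((λ − μ)^2 + 4(k − μ))). Set α = (k − r)/(ν − k + r). Then the matrix Q_α = (k − α·(ν − k − 1))·I − A + α·(J − I − A) is positive semidefinite, where I is the identity matrix and J the all-ones matrix; moreover all row sums of Q_α vanish. -/
/-!
On the complement of the all-ones vector, `J` vanishes and `A` has eigenvalues `r` and
`s = (λ - μ) - r`, so there `Q_α = (1 + α)(rI - A) + αJ` acts as `(1 + α)(rI - A)`, whose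
eigenvalues `0` and `(1 + α)(r - s)` are nonnegative; the choice of `α` is exactly the one that
also kills the all-ones vector. Algebraically this is the identity `Q_α² = (1 + α)(r - s) Q_α`,
which follows from `A² = (k - μ)I + (λ - μ)A + μJ`, `AJ = JA = kJ`, `J² = νJ`, and makes the
symmetric matrix `Q_α` a nonnegative multiple of an orthogonal projection.
-/

namespace Matrix

section
open scoped ComplexOrder

theorem PosSemidef.of_mul_self_eq_smul {n 𝕜 : Type*} [Fintype n] [RCLike 𝕜]
    {Q : Matrix n n 𝕜} (hQ : Q.IsHermitian) {c : ℝ} (hc : 0 ≤ c) (h : Q * Q = c • Q) :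
    Q.PosSemidef := by
  have hQQ : Qᴴ * Q = c • Q := by rw [hQ.eq, h]
  rcases hc.eq_or_lt with rfl | hc
  · rw [zero_smul, conjTranspose_mul_self_eq_zero] at hQQ
    exact hQQ ▸ .zero
  · have : Q = c⁻¹ • (Qᴴ * Q) := by rw [hQQ, smul_smul, inv_mul_cancel₀ hc.ne', one_smul]
    exact this ▸ (posSemidef_conjTranspose_mul_self Q).smul (inv_nonneg.mpr hc.le)

end

theorem of_one_mul_of_one {n α : Type*} [Fintype n] [NonAssocSemiring α] :
    (of fun _ _ => 1 : Matrix n n α) * of (fun _ _ => 1) =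
      (Fintype.card n : α) • of fun _ _ => 1 := by
  ext; simp [mul_apply]

end Matrix

theorem sq_eq_of_eq_add_sqrt_div_two {a b r : ℝ} (hd : 0 ≤ a ^ 2 + 4 * b)
    (hr : r = (a + √(a ^ 2 + 4 * b)) / 2) : r ^ 2 = a * r + b := by
  rw [hr]
  linear_combination (1 / 4) * Real.sq_sqrt hd

theorem nonneg_of_eq_add_sqrt_div_two {a b r : ℝ} (hb : 0 ≤ b)
    (hr : r = (a + √(a ^ 2 + 4 * b)) / 2) : 0 ≤ r := by
  have : |a| ≤ √(a ^ 2 + 4 * b) := by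
    rw [← Real.sqrt_sq_eq_abs]
    exact Real.sqrt_le_sqrt (by linarith)
  rw [hr]
  linarith [neg_abs_le a]

section SRGRelations

variable {R : Type*} [Ring R] [Algebra ℝ R] {A J : R} {ν k l μ r α : ℝ}

variable (A J r α) in
/-- The paper's `Q_α`, rewritten as `(1 + α)(rI - A) + αJ` using `α(ν - k + r) = k - r`. -/
def srgQ : R := (1 + α) • (r • 1 - A) + α • J

/-- The coefficient of `J` in `Q_α² = (1 + α)(2r - (λ - μ)) Q_α`; this is where the parameter
identity `k(k - λ - 1) = (ν - k - 1)μ` enters. -/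
theorem srgQ_all_ones_coeff (hparam : k * (k - l - 1) = (ν - k - 1) * μ)
    (hr : r ^ 2 = (l - μ) * r + (k - μ)) (hm : ν - k + r ≠ 0) (hα : α = (k - r) / (ν - k + r)) :
    (1 + α) ^ 2 * μ + 2 * α * (1 + α) * (r - k) + α ^ 2 * ν = α * (1 + α) * (2 * r - (l - μ)) := by
  subst hα
  field_simp
  linear_combination ν * hr - ν * hparam

theorem srgQ_mul_self (hA : A * A = (k - μ) • 1 + (l - μ) • A + μ • J)
    (hAJ : A * J = k • J) (hJA : J * A = k • J) (hJJ : J * J = ν • J)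
    (hparam : k * (k - l - 1) = (ν - k - 1) * μ) (hr : r ^ 2 = (l - μ) * r + (k - μ))
    (hm : ν - k + r ≠ 0) (hα : α = (k - r) / (ν - k + r)) :
    srgQ A J r α * srgQ A J r α = ((1 + α) * (2 * r - (l - μ))) • srgQ A J r α := by
  have hcoef := srgQ_all_ones_coeff hparam hr hm hα
  simp only [srgQ, add_mul, mul_add, sub_mul, mul_sub, smul_mul_assoc, mul_smul_comm, one_mul,
    mul_one, hA, hAJ, hJA, hJJ, smul_add, smul_sub, smul_smul]
  match_scalars
  · linear_combination -(1 + α) ^ 2 * hr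
  · ring
  · linear_combination hcoef

theorem srgQ_mul_all_ones (hAJ : A * J = k • J) (hJJ : J * J = ν • J)
    (hα : α * (ν - k + r) = k - r) : srgQ A J r α * J = 0 := by
  simp only [srgQ, add_mul, sub_mul, smul_mul_assoc, one_mul, hAJ, hJJ, smul_smul]
  match_scalars
  linear_combination hα

end SRGRelations

namespace SimpleGraph

open Matrix

theorem edist_eq_of_dist_eq {V : Type*} {G : SimpleGraph V} {u v : V} {n : ℕ}
    (h : G.dist u v = n) (hn : n ≠ 0) : G.edist u v = n := by
  have hr : G.Reachable u v := by
    by_contra hr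
    exact hn (h ▸ dist_eq_zero_of_not_reachable hr)
  rw [← hr.coe_dist_eq_edist, h]

theorem adjMatrix_compl_eq {V : Type*} [DecidableEq V] (G : SimpleGraph V) [DecidableRel G.Adj]
    (α : Type*) [AddGroupWithOne α] :
    Gᶜ.adjMatrix α = of (fun _ _ => 1) - 1 - G.adjMatrix α := by
  ext v w
  by_cases hvw : v = w
  · simp [hvw]
  · by_cases hadj : G.Adj v w <;> simp [hvw, hadj, one_apply_ne hvw]

variable {V : Type*} [Fintype V] {G : SimpleGraph V} [DecidableRel G.Adj] {n k ℓ μ : ℕ}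

theorem IsRegularOfDegree.adjMatrix_mul_of_one {α : Type*} [NonAssocSemiring α] {d : ℕ}
    (hd : G.IsRegularOfDegree d) :
    G.adjMatrix α * of (fun _ _ => 1) = (d : α) • of fun _ _ => 1 := by
  ext v w
  simp [Matrix.mul_apply, ← hd v, ← card_neighborFinset_eq_degree, neighborFinset_eq_filter]

theorem IsRegularOfDegree.of_one_mul_adjMatrix {α : Type*} [NonAssocSemiring α] {d : ℕ}
    (hd : G.IsRegularOfDegree d) :
    of (fun _ _ => 1) * G.adjMatrix α = (d : α) • of fun _ _ => 1 := by
  ext v w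
  simp [Matrix.mul_apply, ← hd w, ← card_neighborFinset_eq_degree, neighborFinset_eq_filter,
    adj_comm]

theorem IsSRGWith.adjMatrix_mul_self [DecidableEq V] {α : Type*} [CommRing α]
    (h : G.IsSRGWith n k ℓ μ) :
    G.adjMatrix α * G.adjMatrix α =
      ((k : α) - μ) • 1 + ((ℓ : α) - μ) • G.adjMatrix α + (μ : α) • of fun _ _ => 1 := by
  rw [← sq, h.matrix_eq, adjMatrix_compl_eq]
  simp only [← Nat.cast_smul_eq_nsmul α]
  module

theorem IsSRGWith.lt_card [Nonempty V] (h : G.IsSRGWith n k ℓ μ) : k < n := by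
  obtain ⟨v⟩ := ‹Nonempty V›
  simpa [h.regular v, h.card] using G.degree_lt_card_verts v

theorem IsSRGWith.mu_le {v w : V} (h : G.IsSRGWith n k ℓ μ) (hne : v ≠ w) (hadj : ¬G.Adj v w) :
    μ ≤ k := by
  rw [← h.of_not_adj hne hadj, ← h.regular v]
  exact G.card_commonNeighbors_le_degree_left v w

theorem IsSRGWith.param_eq_cast [Nonempty V] {R : Type*} [CommRing R] (h : G.IsSRGWith n k ℓ μ) :
    (k : R) * (k - ℓ - 1) = (n - k - 1) * μ := by
  have hkn := h.lt_card
  have hparam := congrArg (Nat.cast : ℕ → R) (h.param_eq G (by omega))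
  rcases Nat.eq_zero_or_pos k with rfl | hk
  · simpa [Nat.cast_sub (by omega : 1 ≤ n)] using hparam
  · obtain ⟨v⟩ := ‹Nonempty V›
    obtain ⟨w, hw⟩ := (G.degree_pos_iff_exists_adj v).mp (by rwa [h.regular v])
    have hℓk : ℓ < k := by
      simpa [h.of_adj v w hw, h.regular v] using hw.card_commonNeighbors_lt_degree
    rw [Nat.sub_sub, Nat.sub_sub] at hparam
    push_cast [Nat.cast_sub (show ℓ + 1 ≤ k by omega), Nat.cast_sub (show k + 1 ≤ n by omega)]
      at hparam
    linear_combination hparam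

theorem IsSRGWith.card_sub_add_pos [Nonempty V] (h : G.IsSRGWith n k ℓ μ) (hμk : μ ≤ k) {r : ℝ}
    (hr : r = ((ℓ - μ) + √((ℓ - μ) ^ 2 + 4 * (k - μ))) / 2) : 0 < (n : ℝ) - k + r := by
  have hkn : (k : ℝ) < n := by exact_mod_cast h.lt_card
  have hr0 := nonneg_of_eq_add_sqrt_div_two (by simpa using hμk) hr
  linarith

variable [DecidableEq V]

theorem IsSRGWith.srgQ_posSemidef [Nonempty V] (h : G.IsSRGWith n k ℓ μ) (hμk : μ ≤ k) {r α : ℝ}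
    (hr : r = ((ℓ - μ) + √((ℓ - μ) ^ 2 + 4 * (k - μ))) / 2)
    (hα : α = (k - r) / (n - k + r)) :
    (srgQ (G.adjMatrix ℝ) (of fun _ _ => 1) r α).PosSemidef := by
  have hμk' : (μ : ℝ) ≤ k := by exact_mod_cast hμk
  have hn : (0 : ℝ) < n := by exact_mod_cast (Nat.zero_le k).trans_lt h.lt_card
  have hm := h.card_sub_add_pos hμk hr
  have h1α : 0 < 1 + α := by
    rw [hα, one_add_div hm.ne']
    exact div_pos (by linarith) hm
  have hgap : 0 ≤ 2 * r - (ℓ - μ) := by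
    linarith [Real.sqrt_nonneg (((ℓ : ℝ) - μ) ^ 2 + 4 * ((k : ℝ) - μ))]
  have hsymm : (srgQ (G.adjMatrix ℝ) (of fun _ _ => 1) r α).IsHermitian := by
    rw [isHermitian_iff_isSymm, srgQ]
    exact (((isSymm_one.smul r).sub G.isSymm_adjMatrix).smul _).add
      ((IsSymm.ext fun _ _ => rfl).smul _)
  refine .of_mul_self_eq_smul hsymm (mul_nonneg h1α.le hgap) ?_
  exact srgQ_mul_self h.adjMatrix_mul_self h.regular.adjMatrix_mul_of_one
    h.regular.of_one_mul_adjMatrix (h.card ▸ of_one_mul_of_one) h.param_eq_cast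
    (sq_eq_of_eq_add_sqrt_div_two (add_nonneg (sq_nonneg _) (by linarith)) hr) hm.ne' hα

theorem IsSRGWith.srgQ_mul_of_one [Nonempty V] (h : G.IsSRGWith n k ℓ μ) (hμk : μ ≤ k) {r α : ℝ}
    (hr : r = ((ℓ - μ) + √((ℓ - μ) ^ 2 + 4 * (k - μ))) / 2)
    (hα : α = (k - r) / (n - k + r)) :
    srgQ (G.adjMatrix ℝ) (of fun _ _ => 1) r α * of (fun _ _ => 1) = 0 := by
  have hm := h.card_sub_add_pos hμk hr
  exact srgQ_mul_all_ones h.regular.adjMatrix_mul_of_one (h.card ▸ of_one_mul_of_one)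
    (by rw [hα]; field_simp)

end SimpleGraph

theorem stmt15_general {V : Type*} [Fintype V] [DecidableEq V]
    (G : SimpleGraph V) [DecidableRel G.Adj]
    (ν k l μ : ℕ) (hsrg : G.IsSRGWith ν k l μ)
    (hdiam_eq : ∃ x y : V, G.dist x y = 2)
    (r α : ℝ)
    (hr : r = (((l : ℝ) - (μ : ℝ)) +
      Real.sqrt (((l : ℝ) - (μ : ℝ)) ^ 2 + 4 * ((k : ℝ) - (μ : ℝ)))) / 2)
    (hα : α = ((k : ℝ) - r) / ((ν : ℝ) - (k : ℝ) + r))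
    (Q : Matrix V V ℝ)
    (hQ : Q = ((k : ℝ) - α * ((ν : ℝ) - (k : ℝ) - 1)) • (1 : Matrix V V ℝ) -
      G.adjMatrix ℝ +
      α • ((Matrix.of fun _ _ => (1 : ℝ)) - 1 - G.adjMatrix ℝ)) :
    Q.PosSemidef ∧ ∀ x : V, ∑ y : V, Q x y = 0 := by
  obtain ⟨x, y, hxy⟩ := hdiam_eq
  obtain ⟨hne, hnadj, -⟩ := G.edist_eq_two_iff.mp (G.edist_eq_of_dist_eq hxy two_ne_zero)
  have : Nonempty V := ⟨x⟩
  have hμk := hsrg.mu_le hne hnadj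
  have hm := hsrg.card_sub_add_pos hμk hr
  have hQ' : Q = srgQ (G.adjMatrix ℝ) (Matrix.of fun _ _ => 1) r α := by
    rw [hQ, srgQ, hα]
    match_scalars
    · field_simp
      ring
    all_goals ring
  have hQJ : Q * Matrix.of (fun _ _ => 1) = 0 := hQ' ▸ hsrg.srgQ_mul_of_one hμk hr hα
  refine ⟨hQ' ▸ hsrg.srgQ_posSemidef hμk hr hα, fun v => ?_⟩
  simpa [Matrix.mul_apply] using congrFun (congrFun hQJ v) v

/-- For a connected strongly regular graph of diameter `2` with parameters
`(ν, k, λ, μ)`, adjacency matrix `A`, larger nontrivial eigenvalue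
`r = ((λ−μ) + √((λ−μ)² + 4(k−μ)))/2` and `α = (k−r)/(ν−k+r)`, the matrix
`Q_α = (k − α(ν−k−1))·I − A + α·(J − I − A)` is positive semidefinite and all
its row sums vanish. -/
theorem stmt15 {V : Type*} [Fintype V] [DecidableEq V]
    (G : SimpleGraph V) [DecidableRel G.Adj]
    (ν k l μ : ℕ) (hsrg : G.IsSRGWith ν k l μ) (hconn : G.Connected)
    (hdiam_le : ∀ x y : V, G.dist x y ≤ 2) (hdiam_eq : ∃ x y : V, G.dist x y = 2)
    (r α : ℝ)
    (hr : r = (((l : ℝ) - (μ : ℝ)) +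
      Real.sqrt (((l : ℝ) - (μ : ℝ)) ^ 2 + 4 * ((k : ℝ) - (μ : ℝ)))) / 2)
    (hα : α = ((k : ℝ) - r) / ((ν : ℝ) - (k : ℝ) + r))
    (Q : Matrix V V ℝ)
    (hQ : Q = ((k : ℝ) - α * ((ν : ℝ) - (k : ℝ) - 1)) • (1 : Matrix V V ℝ) -
      G.adjMatrix ℝ +
      α • ((Matrix.of fun _ _ => (1 : ℝ)) - 1 - G.adjMatrix ℝ)) :
    Q.PosSemidef ∧ ∀ x : V, ∑ y : V, Q x y = 0 :=
  stmt15_general G ν k l μ hsrg hdiam_eq r α hr hα Q hQ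
end
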